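/- arXiv:2504.19931 — 2 statements merged into one kernel-verified Lean document; each statement's English description precedes it below -/
import Mathlib

section
/- Let Z : H₋ → H₊ be a Hilbert–Schmidt operator with operator norm strictly less than 1 (equivalently id - Z*Z is positive definite). Define A_Z := Z · (argtanh|Z|)/|Z| = Z · Σ_{k≥0} (Z*Z)^k/(2k+1). Then |A_Z| = argtanh|Z| and A_Z · |A_Z|^{-1} · tanh|A_Z| = Z, where all functions of |Z| and |A_Z| are defined by continuous functional calculus. -/
/-!
Put `P = Z*Z`; since `‖Z‖ < 1` its spectrum lies in `[0, 1)`, where `argFun` is continuous.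
Then `A_Z* A_Z = argFun(P) P argFun(P) = g(P)` with `g t = t · argFun(t)² = (artanh √t)²`, so
composing functional calculi gives `|A_Z| = (√ ∘ g)(P) = artanh √P` and
`A_Z tanhc(A_Z* A_Z) = Z · (argFun · tanhc ∘ g)(P)`, and `argFun · tanhc ∘ g = 1` on `[0, 1)`
because `tanh ∘ artanh = id` there.
-/

noncomputable section

open ContinuousLinearMap Complex
open scoped InnerProductSpace

namespace Siegel

variable (Hp Hm : Type) [NormedAddCommGroup Hp] [InnerProductSpace ℂ Hp] [CompleteSpace Hp]
  [NormedAddCommGroup Hm] [InnerProductSpace ℂ Hm] [CompleteSpace Hm]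

/-- The full Hilbert space `H = H₊ ⊕ H₋` (Hilbert space direct sum). -/
abbrev FullH := WithLp 2 (Hp × Hm)

variable {Hp Hm}

/-- The block operator `[[g, h], [k, l]]` on `H = H₊ ⊕ H₋`. -/
def blockOp (g : Hp →L[ℂ] Hp) (h : Hm →L[ℂ] Hp) (k : Hp →L[ℂ] Hm) (l : Hm →L[ℂ] Hm) :
    FullH Hp Hm →L[ℂ] FullH Hp Hm :=
  ((WithLp.prodContinuousLinearEquiv 2 ℂ Hp Hm).symm :
      (Hp × Hm) →L[ℂ] FullH Hp Hm) ∘L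
    ((g.coprod h).prod (k.coprod l)) ∘L
    ((WithLp.prodContinuousLinearEquiv 2 ℂ Hp Hm) : FullH Hp Hm →L[ℂ] (Hp × Hm))

/-- The complex structure `J`, acting by `i` on `H₊` and `-i` on `H₋`. -/
def Jop : FullH Hp Hm →L[ℂ] FullH Hp Hm :=
  blockOp (Complex.I • ContinuousLinearMap.id ℂ Hp) 0 0
    ((-Complex.I) • ContinuousLinearMap.id ℂ Hm)

section Conj

variable (C : Hp ≃ₛₗᵢ[starRingEnd ℂ] Hm)

/-- Conjugate `h̄ : H₊ → H₋` of an operator `h : H₋ → H₊`, with respect to the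
conjugation `C` exchanging `H₊` and `H₋`: `h̄ u = conj (h (conj u))`. -/
def cbar (h : Hm →L[ℂ] Hp) : Hp →L[ℂ] Hm :=
  LinearMap.mkContinuous
    { toFun := fun u => C (h (C u))
      map_add' := by intro u v; simp
      map_smul' := by intro a u; simp [map_smulₛₗ] }
    ‖h‖ (by
      intro u
      simp only [LinearMap.coe_mk, AddHom.coe_mk]
      calc ‖C (h (C u))‖ = ‖h (C u)‖ := C.norm_map _
        _ ≤ ‖h‖ * ‖C u‖ := h.le_opNorm _
        _ = ‖h‖ * ‖u‖ := by rw [C.norm_map])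

/-- Conjugate `ḡ : H₋ → H₋` of an operator `g : H₊ → H₊`. -/
def dbar (g : Hp →L[ℂ] Hp) : Hm →L[ℂ] Hm :=
  LinearMap.mkContinuous
    { toFun := fun v => C (g (C.symm v))
      map_add' := by intro u v; simp
      map_smul' := by intro a u; simp [map_smulₛₗ] }
    ‖g‖ (by
      intro u
      simp only [LinearMap.coe_mk, AddHom.coe_mk]
      calc ‖C (g (C.symm u))‖ = ‖g (C.symm u)‖ := C.norm_map _
        _ ≤ ‖g‖ * ‖C.symm u‖ := g.le_opNorm _
        _ = ‖g‖ * ‖u‖ := by rw [C.symm.norm_map])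

/-- The transpose `hᵀ := (h̄)* : H₋ → H₊` of `h : H₋ → H₊`. -/
def transp (h : Hm →L[ℂ] Hp) : Hm →L[ℂ] Hp :=
  ContinuousLinearMap.adjoint (cbar C h)

end Conj

/-- Hilbert–Schmidt property relative to a Hilbert basis of the domain. -/
def IsHS {ι E F : Type*} [NormedAddCommGroup E] [InnerProductSpace ℂ E]
    [NormedAddCommGroup F] [InnerProductSpace ℂ F]
    (b : HilbertBasis ι ℂ E) (T : E →L[ℂ] F) : Prop :=
  Summable fun i => ‖T (b i)‖ ^ 2

/-- Squared Hilbert–Schmidt norm relative to a Hilbert basis. -/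
def hsNorm {ι E F : Type*} [NormedAddCommGroup E] [InnerProductSpace ℂ E]
    [NormedAddCommGroup F] [InnerProductSpace ℂ F]
    (b : HilbertBasis ι ℂ E) (T : E →L[ℂ] F) : ℝ :=
  Real.sqrt (∑' i, ‖T (b i)‖ ^ 2)

/-- The absolute value `|T| = (T*T)^{1/2}` of an operator `T : E → F`,
defined by continuous functional calculus. -/
def absOp {E F : Type*} [NormedAddCommGroup E] [InnerProductSpace ℂ E] [CompleteSpace E]
    [NormedAddCommGroup F] [InnerProductSpace ℂ F] [CompleteSpace F]
    (T : E →L[ℂ] F) : E →L[ℂ] E :=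
  cfc Real.sqrt (ContinuousLinearMap.adjoint T ∘L T)

/-- Trace class property relative to a Hilbert basis: `Σ ⟨eᵢ, |T| eᵢ⟩ < ∞`. -/
def IsTraceClassAlong {ι E : Type*} [NormedAddCommGroup E] [InnerProductSpace ℂ E]
    [CompleteSpace E] (b : HilbertBasis ι ℂ E) (T : E →L[ℂ] E) : Prop :=
  Summable fun i => (inner ℂ (b i) (absOp T (b i)) : ℂ).re

/-- The trace norm `‖T‖₁ = Σ ⟨eᵢ, |T| eᵢ⟩` relative to a Hilbert basis. -/
def traceNormAlong {ι E : Type*} [NormedAddCommGroup E] [InnerProductSpace ℂ E]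
    [CompleteSpace E] (b : HilbertBasis ι ℂ E) (T : E →L[ℂ] E) : ℝ :=
  ∑' i, (inner ℂ (b i) (absOp T (b i)) : ℂ).re

/-- The trace of an operator relative to a Hilbert basis. -/
def traceAlong {ι E : Type*} [NormedAddCommGroup E] [InnerProductSpace ℂ E]
    (b : HilbertBasis ι ℂ E) (T : E →L[ℂ] E) : ℂ :=
  ∑' i, (inner ℂ (b i) (T (b i)) : ℂ)

/-- Positive definiteness of an operator: `⟨T u, u⟩ > 0` for all `u ≠ 0`. -/
def IsPosDef {E : Type*} [NormedAddCommGroup E] [InnerProductSpace ℂ E]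
    (T : E →L[ℂ] E) : Prop :=
  ∀ u : E, u ≠ 0 → 0 < (inner ℂ (T u) u : ℂ).re

/-- Membership in the restricted Siegel disc. -/
def InSiegel {ι : Type*} (C : Hp ≃ₛₗᵢ[starRingEnd ℂ] Hm) (bm : HilbertBasis ι ℂ Hm)
    (Z : Hm →L[ℂ] Hp) : Prop :=
  IsHS bm Z ∧ transp C Z = Z ∧
    IsPosDef (1 - ContinuousLinearMap.adjoint Z ∘L Z)

/-- Membership in the Lie algebra `gl_{1,2}(V)`:
block operators `[[A₁, A₂], [A̅₂, A̅₁]]` with `A₁` trace class and `A₂` Hilbert–Schmidt. -/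
def InGl12 {ιp ιm : Type*} (C : Hp ≃ₛₗᵢ[starRingEnd ℂ] Hm)
    (bp : HilbertBasis ιp ℂ Hp) (bm : HilbertBasis ιm ℂ Hm)
    (T : FullH Hp Hm →L[ℂ] FullH Hp Hm) : Prop :=
  ∃ (A₁ : Hp →L[ℂ] Hp) (A₂ : Hm →L[ℂ] Hp),
    IsTraceClassAlong bp A₁ ∧ IsHS bm A₂ ∧
      T = blockOp A₁ A₂ (cbar C A₂) (dbar C A₁)

/-- Real inverse hyperbolic tangent. -/
def artanh (x : ℝ) : ℝ := Real.log ((1 + x) / (1 - x)) / 2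


/-- The entire function `t ↦ cosh (√t)`, so that `cosh |A| = coshs (A*A)` via cfc. -/
def coshs (t : ℝ) : ℝ := Real.cosh (Real.sqrt t)

/-- The entire function `t ↦ sinh (√t) / √t`, so that `sinh|A|/|A| = sinhc (A*A)` via cfc. -/
def sinhc (t : ℝ) : ℝ := if t = 0 then 1 else Real.sinh (Real.sqrt t) / Real.sqrt t

/-- The entire function `t ↦ tanh (√t) / √t`. -/
def tanhc (t : ℝ) : ℝ := if t = 0 then 1 else Real.tanh (Real.sqrt t) / Real.sqrt t

/-- The function `t ↦ artanh (√t) / √t`, so that `argtanh|Z|/|Z| = argFun (Z*Z)` via cfc. -/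
def argFun (t : ℝ) : ℝ := if t = 0 then 1 else artanh (Real.sqrt t) / Real.sqrt t

/-- `A_Z := Z ⬝ argtanh|Z|/|Z|`, defined via continuous functional calculus. -/
def AZop (Z : Hm →L[ℂ] Hp) : Hm →L[ℂ] Hp :=
  Z ∘L cfc argFun (ContinuousLinearMap.adjoint Z ∘L Z)

/-- The momentum map `μ(M)(A) = -½ Tr((M*JM - J)A)` (trace relative to a Hilbert basis). -/
def muO {ιH : Type*} (bH : HilbertBasis ιH ℂ (FullH Hp Hm))
    (M A : FullH Hp Hm →L[ℂ] FullH Hp Hm) : ℂ :=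
  -(1 / 2 : ℂ) * traceAlong bH ((ContinuousLinearMap.adjoint M ∘L Jop ∘L M - Jop) ∘L A)

open Set Filter Topology

lemma artanh_eq_real_artanh {x : ℝ} (hx : x ∈ Icc (-1) 1) : artanh x = Real.artanh x := by
  rw [artanh, Real.artanh_eq_half_log hx]
  ring

lemma hasDerivAt_artanh_zero : HasDerivAt artanh 1 0 := by
  have hquot := ((hasDerivAt_id (0 : ℝ)).const_add 1).div
    ((hasDerivAt_id (0 : ℝ)).const_sub 1) (by norm_num)
  have hlog := (hquot.log (by norm_num)).div_const 2
  norm_num at hlog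
  exact hlog

lemma continuousOn_artanh : ContinuousOn artanh (Ioo (-1) 1) := by
  intro x hx
  have hsub : (1 : ℝ) - x ≠ 0 := by linarith [hx.2]
  have hquot : (1 + x) / (1 - x) ≠ 0 := div_ne_zero (by linarith [hx.1]) hsub
  exact (((continuousAt_const.add continuousAt_id).div
    (continuousAt_const.sub continuousAt_id) hsub).log hquot).div_const 2 |>.continuousWithinAt

lemma hasDerivAt_tanh (x : ℝ) : HasDerivAt Real.tanh (1 / Real.cosh x ^ 2) x := by
  have hquot := (Real.hasDerivAt_sinh x).div (Real.hasDerivAt_cosh x) (Real.cosh_pos x).ne'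
  rw [show Real.tanh = Real.sinh / Real.cosh from funext Real.tanh_eq_sinh_div_cosh]
  refine hquot.congr_deriv ?_
  rw [← Real.cosh_sq_sub_sinh_sq x]
  ring

lemma continuous_tanh : Continuous Real.tanh :=
  continuous_iff_continuousAt.2 fun x => (hasDerivAt_tanh x).continuousAt

lemma tendsto_comp_sqrt_div_sqrt {f : ℝ → ℝ} (hf0 : f 0 = 0) (hf : HasDerivAt f 1 0) :
    Tendsto (fun t => f √t / √t) (𝓝[>] 0) (𝓝 1) := by
  have hsqrt : Tendsto Real.sqrt (𝓝[>] 0) (𝓝[≠] 0) := by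
    refine tendsto_nhdsWithin_iff.2 ⟨?_, ?_⟩
    · exact (Real.continuous_sqrt.tendsto' 0 0 Real.sqrt_zero).mono_left nhdsWithin_le_nhds
    · filter_upwards [self_mem_nhdsWithin] with t ht
      exact (Real.sqrt_pos.2 ht).ne'
  refine ((hasDerivAt_iff_tendsto_slope.1 hf).comp hsqrt).congr fun t => ?_
  simp [slope_def_field, hf0]

lemma continuousOn_ite_div_sqrt {f : ℝ → ℝ} {s : Set ℝ} (hs : s ⊆ Ici 0) (hf0 : f 0 = 0)
    (hf' : HasDerivAt f 1 0) (hf : ContinuousOn f (Real.sqrt '' s)) :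
    ContinuousOn (fun t => if t = 0 then 1 else f √t / √t) s := by
  intro t ht
  rcases (mem_Ici.1 (hs ht)).eq_or_lt with rfl | hpos
  · rw [← continuousWithinAt_sdiff_self, ContinuousWithinAt, if_pos rfl]
    have hle : 𝓝[s \ {0}] (0 : ℝ) ≤ 𝓝[>] 0 :=
      nhdsWithin_mono _ fun u hu => lt_of_le_of_ne (hs hu.1) (Ne.symm hu.2)
    refine ((tendsto_comp_sqrt_div_sqrt hf0 hf').mono_left hle).congr' ?_
    filter_upwards [self_mem_nhdsWithin] with u hu
    rw [if_neg (mem_singleton_iff.not.1 hu.2)]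
  · have hquot : ContinuousWithinAt (fun u => f √u / √u) s t :=
      (hf.comp Real.continuous_sqrt.continuousOn (mapsTo_image _ _) t ht).div
        Real.continuous_sqrt.continuousWithinAt (Real.sqrt_pos.2 hpos).ne'
    refine hquot.congr_of_eventuallyEq ?_ (if_neg hpos.ne')
    filter_upwards [nhdsWithin_le_nhds (eventually_ne_nhds hpos.ne')] with u hu
    rw [if_neg hu]

lemma continuousOn_tanhc : ContinuousOn tanhc (Ici 0) :=
  continuousOn_ite_div_sqrt subset_rfl Real.tanh_zero (by simpa using hasDerivAt_tanh 0)
    continuous_tanh.continuousOn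

lemma continuousOn_argFun : ContinuousOn argFun (Ico 0 1) := by
  refine continuousOn_ite_div_sqrt Ico_subset_Ici_self (by simp [artanh]) hasDerivAt_artanh_zero
    (continuousOn_artanh.mono ?_)
  rintro _ ⟨t, ht, rfl⟩
  exact ⟨by linarith [Real.sqrt_nonneg t], (Real.sqrt_lt' one_pos).2 (by simpa using ht.2)⟩

lemma mul_argFun_sq {t : ℝ} (ht : 0 ≤ t) : t * argFun t ^ 2 = artanh √t ^ 2 := by
  rcases ht.eq_or_lt with rfl | hpos
  · simp [artanh]
  · rw [argFun, if_neg hpos.ne', div_pow, Real.sq_sqrt ht]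
    field_simp

lemma sqrt_mul_argFun_sq {t : ℝ} (ht : t ∈ Ico 0 1) : √(t * argFun t ^ 2) = artanh √t := by
  rw [mul_argFun_sq ht.1, Real.sqrt_sq]
  rw [artanh_eq_real_artanh ⟨by linarith [Real.sqrt_nonneg t], Real.sqrt_le_one.2 ht.2.le⟩]
  exact Real.artanh_nonneg (Real.sqrt_nonneg t)

lemma argFun_mul_tanhc {t : ℝ} (ht : t ∈ Ico 0 1) : argFun t * tanhc (t * argFun t ^ 2) = 1 := by
  rcases ht.1.eq_or_lt with rfl | hpos
  · simp [argFun, tanhc]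
  · have hsqrt : √t ∈ Ioo 0 1 :=
      ⟨Real.sqrt_pos.2 hpos, (Real.sqrt_lt' one_pos).2 (by simpa using ht.2)⟩
    have hart : artanh √t = Real.artanh √t :=
      artanh_eq_real_artanh ⟨by linarith [hsqrt.1], hsqrt.2.le⟩
    have hart_pos : 0 < Real.artanh √t := Real.artanh_pos hsqrt
    rw [mul_argFun_sq ht.1, hart, tanhc, if_neg (by positivity), Real.sqrt_sq hart_pos.le,
      Real.tanh_artanh ⟨by linarith [hsqrt.1], hsqrt.2⟩, argFun, if_neg hpos.ne', hart]
    field_simp [hsqrt.1.ne', hart_pos.ne']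

section Operators

variable {E F : Type*} [NormedAddCommGroup E] [InnerProductSpace ℂ E] [CompleteSpace E]
  [NormedAddCommGroup F] [InnerProductSpace ℂ F] [CompleteSpace F]

lemma spectrum_adjoint_comp_self_subset_Icc (T : E →L[ℂ] F) :
    spectrum ℝ (adjoint T ∘L T) ⊆ Icc 0 (‖T‖ ^ 2) := by
  intro t ht
  refine ⟨spectrum_nonneg_of_nonneg ((nonneg_iff_isPositive _).2
    (isPositive_adjoint_comp_self T)) ht, ?_⟩
  calc t ≤ ‖adjoint T ∘L T‖ * ‖(1 : E →L[ℂ] E)‖ :=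
        (Real.le_norm_self t).trans (spectrum.norm_le_norm_mul_of_mem ht)
    _ ≤ ‖adjoint T ∘L T‖ * 1 := by gcongr; exact norm_id_le
    _ = ‖T‖ ^ 2 := by rw [mul_one, norm_adjoint_comp_self, sq]

lemma adjoint_comp_self_comp_cfc (T : E →L[ℂ] F) {f : ℝ → ℝ}
    (hf : ContinuousOn f (spectrum ℝ (adjoint T ∘L T))) :
    adjoint (T ∘L cfc f (adjoint T ∘L T)) ∘L (T ∘L cfc f (adjoint T ∘L T)) =
      cfc (fun t => t * f t ^ 2) (adjoint T ∘L T) := by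
  set P := adjoint T ∘L T
  have hP : IsSelfAdjoint P := (isPositive_adjoint_comp_self T).isSelfAdjoint
  have hfP : IsSelfAdjoint (cfc f P) := cfc_predicate f P
  calc adjoint (T ∘L cfc f P) ∘L (T ∘L cfc f P) = cfc f P * (cfc id P * cfc f P) := by
        rw [adjoint_comp, ← star_eq_adjoint (cfc f P), hfP.star_eq, cfc_id ℝ P]
        rfl
    _ = cfc (fun t => t * f t ^ 2) P := by
        rw [← cfc_mul .., ← cfc_mul ..]
        exact cfc_congr fun t _ => by simp only [id]; ring

end Operators

theorem AZ_absolute_value_and_tanh_general (Z : Hm →L[ℂ] Hp) (hZ1 : ‖Z‖ < 1) :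
    absOp (AZop Z) = cfc (fun t : ℝ => artanh (Real.sqrt t))
        (ContinuousLinearMap.adjoint Z ∘L Z) ∧
      AZop Z ∘L cfc tanhc (ContinuousLinearMap.adjoint (AZop Z) ∘L AZop Z) = Z := by
  set P := adjoint Z ∘L Z
  have hP : IsSelfAdjoint P := (isPositive_adjoint_comp_self Z).isSelfAdjoint
  have hspec : spectrum ℝ P ⊆ Ico 0 1 := (spectrum_adjoint_comp_self_subset_Icc Z).trans
    (Icc_subset_Ico_right (pow_lt_one₀ (norm_nonneg Z) hZ1 two_ne_zero))
  have hf : ContinuousOn argFun (spectrum ℝ P) := continuousOn_argFun.mono hspec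
  have hg : ContinuousOn (fun t => t * argFun t ^ 2) (spectrum ℝ P) :=
    continuousOn_id.mul (hf.pow 2)
  have hg_nonneg : (fun t => t * argFun t ^ 2) '' spectrum ℝ P ⊆ Ici 0 := by
    rintro _ ⟨t, ht, rfl⟩
    exact mul_nonneg (hspec ht).1 (sq_nonneg _)
  have hsq : adjoint (AZop Z) ∘L AZop Z = cfc (fun t => t * argFun t ^ 2) P :=
    adjoint_comp_self_comp_cfc Z hf
  constructor
  · rw [absOp, hsq, ← cfc_comp' Real.sqrt _ P]
    exact cfc_congr fun t ht => sqrt_mul_argFun_sq (hspec ht)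
  · have htanhc : ContinuousOn tanhc ((fun t => t * argFun t ^ 2) '' spectrum ℝ P) :=
      continuousOn_tanhc.mono hg_nonneg
    rw [hsq, ← cfc_comp' tanhc _ P htanhc, AZop, comp_assoc, ← mul_def,
      ← cfc_mul argFun (fun t => tanhc (t * argFun t ^ 2)) P hf
        (htanhc.comp hg (mapsTo_image _ _)),
      cfc_congr fun t ht => argFun_mul_tanhc (hspec ht), cfc_const_one ℝ P, one_def, comp_id]

/-- For `Z` Hilbert–Schmidt with `‖Z‖ < 1` and
`A_Z := Z ⬝ argtanh|Z|/|Z|`, one has `|A_Z| = argtanh|Z|` and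
`A_Z ⬝ |A_Z|⁻¹ ⬝ tanh|A_Z| = Z`. -/
theorem AZ_absolute_value_and_tanh {ιm : Type*} (bm : HilbertBasis ιm ℂ Hm)
    (Z : Hm →L[ℂ] Hp) (hZ : IsHS bm Z) (hZ1 : ‖Z‖ < 1) :
    absOp (AZop Z) = cfc (fun t : ℝ => artanh (Real.sqrt t))
        (ContinuousLinearMap.adjoint Z ∘L Z) ∧
      AZop Z ∘L cfc tanhc (ContinuousLinearMap.adjoint (AZop Z) ∘L AZop Z) = Z :=
  AZ_absolute_value_and_tanh_general Z hZ1

end Siegel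
end
end

section
/- The stabilizer of 0 ∈ D_res(H) under the Sp_{1,2}(V,Ω)-action (a,Z) ↦ (gZ+h)(h̄Z+ḡ)^{-1} is the subgroup of block-diagonal elements [[g,0],[0,ḡ]] with g unitary on H₊ and g - id trace class; i.e., it is isomorphic to U₁(H₊) = U(H₊) ∩ (id + L¹(H₊)). -/
/-!
If `a · 0 = h ḡ⁻¹` vanishes then `h = 0`, and for the block-diagonal `a = diag(g, ḡ)` the
symplectic condition `a* J a = J`, tested on `H₊`, says that `g` is an isometry. Since
`ḡ = C g C⁻¹` is invertible, `g` is onto, hence unitary.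
-/

noncomputable section

open ContinuousLinearMap Complex
open scoped InnerProductSpace

namespace Siegel

variable (Hp Hm : Type) [NormedAddCommGroup Hp] [InnerProductSpace ℂ Hp] [CompleteSpace Hp]
  [NormedAddCommGroup Hm] [InnerProductSpace ℂ Hm] [CompleteSpace Hm]

variable {Hp Hm}

lemma _root_.ContinuousLinearMap.comp_inverse_eq_zero_iff {𝕜 E F : Type*}
    [NontriviallyNormedField 𝕜] [NormedAddCommGroup E] [NormedSpace 𝕜 E] [NormedAddCommGroup F]
    [NormedSpace 𝕜 F] {u : E →L[𝕜] E} (hu : IsUnit u) {T : E →L[𝕜] F} :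
    T ∘L Ring.inverse u = 0 ↔ T = 0 := by
  refine ⟨fun hT => ?_, fun hT => by rw [hT, zero_comp]⟩
  calc T = T ∘L (Ring.inverse u * u) := by rw [Ring.inverse_mul_cancel u hu]; rfl
    _ = 0 := by rw [mul_def, ← comp_assoc, hT, zero_comp]

lemma _root_.ContinuousLinearMap.comp_adjoint_eq_one_of_surjective {𝕜 E : Type*} [RCLike 𝕜]
    [NormedAddCommGroup E] [InnerProductSpace 𝕜 E] [CompleteSpace E] {T : E →L[𝕜] E}
    (hT : adjoint T ∘L T = 1) (hsurj : Function.Surjective T) :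
    T ∘L adjoint T = 1 := by
  ext w
  obtain ⟨p, rfl⟩ := hsurj w
  simpa using congrArg T (DFunLike.congr_fun hT p)

section

omit [CompleteSpace Hp] [CompleteSpace Hm]

@[simp]
lemma blockOp_apply (g : Hp →L[ℂ] Hp) (h : Hm →L[ℂ] Hp) (k : Hp →L[ℂ] Hm) (l : Hm →L[ℂ] Hm)
    (u : Hp) (v : Hm) :
    blockOp g h k l (WithLp.toLp 2 (u, v)) = WithLp.toLp 2 (g u + h v, k u + l v) := by
  simp [blockOp]

@[simp]
lemma cbar_zero (C : Hp ≃ₛₗᵢ[starRingEnd ℂ] Hm) : cbar C (0 : Hm →L[ℂ] Hp) = 0 := by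
  ext u
  simp [cbar]

lemma dbar_apply (C : Hp ≃ₛₗᵢ[starRingEnd ℂ] Hm) (g : Hp →L[ℂ] Hp) (v : Hm) :
    dbar C g v = C (g (C.symm v)) :=
  rfl

lemma surjective_of_isUnit_dbar (C : Hp ≃ₛₗᵢ[starRingEnd ℂ] Hm) {g : Hp →L[ℂ] Hp}
    (hg : IsUnit (dbar C g)) : Function.Surjective g := by
  intro w
  obtain ⟨u, hu⟩ := hg
  have hC : dbar C g ((↑u⁻¹ : Hm →L[ℂ] Hm) (C w)) = C w := by
    rw [← hu, ← mul_apply_eq_comp, Units.mul_inv, one_apply_eq_self]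
  exact ⟨C.symm ((↑u⁻¹ : Hm →L[ℂ] Hm) (C w)), by simpa [dbar_apply] using congrArg C.symm hC⟩

end

lemma inner_map_map_of_blockOp_preserves_Jop {g : Hp →L[ℂ] Hp} {l : Hm →L[ℂ] Hm}
    (hJ : adjoint (blockOp g 0 0 l) ∘L Jop ∘L blockOp g 0 0 l = Jop) (u v : Hp) :
    ⟪g u, g v⟫_ℂ = ⟪u, v⟫_ℂ := by
  have key := congrArg (fun T => ⟪WithLp.toLp 2 (u, (0 : Hm)), T (WithLp.toLp 2 (v, 0))⟫_ℂ) hJ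
  simp only [comp_apply, adjoint_inner_right, blockOp_apply, Jop] at key
  simpa [WithLp.prod_inner_apply, inner_smul_right, Complex.I_ne_zero] using key

lemma adjoint_comp_self_eq_one_of_blockOp_preserves_Jop {g : Hp →L[ℂ] Hp} {l : Hm →L[ℂ] Hm}
    (hJ : adjoint (blockOp g 0 0 l) ∘L Jop ∘L blockOp g 0 0 l = Jop) :
    adjoint g ∘L g = 1 := by
  ext u
  refine ext_inner_left ℂ fun v => ?_
  rw [comp_apply, adjoint_inner_right, inner_map_map_of_blockOp_preserves_Jop hJ,
    one_apply_eq_self]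

theorem stabilizer_of_zero_general (C : Hp ≃ₛₗᵢ[starRingEnd ℂ] Hm)
    (g : Hp →L[ℂ] Hp) (h : Hm →L[ℂ] Hp)
    (hsymp : ContinuousLinearMap.adjoint (blockOp g h (cbar C h) (dbar C g)) ∘L Jop ∘L
      blockOp g h (cbar C h) (dbar C g) = Jop)
    (hdg : IsUnit (dbar C g)) :
    h ∘L Ring.inverse (dbar C g) = 0 ↔
      (h = 0 ∧ ContinuousLinearMap.adjoint g ∘L g = 1 ∧
        g ∘L ContinuousLinearMap.adjoint g = 1) := by
  rw [comp_inverse_eq_zero_iff hdg]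
  refine ⟨?_, And.left⟩
  rintro rfl
  rw [cbar_zero] at hsymp
  have hgg := adjoint_comp_self_eq_one_of_blockOp_preserves_Jop hsymp
  exact ⟨rfl, hgg, comp_adjoint_eq_one_of_surjective hgg (surjective_of_isUnit_dbar C hdg)⟩

/-- The stabilizer of `0` under the `Sp₁,₂`-action consists exactly of the
block-diagonal elements with unitary `g` (and `g - id` trace class): `a · 0 = 0` iff `h = 0`
and `g` is unitary. -/
theorem stabilizer_of_zero {ιp ιm : Type*} (C : Hp ≃ₛₗᵢ[starRingEnd ℂ] Hm)
    (bp : HilbertBasis ιp ℂ Hp) (bm : HilbertBasis ιm ℂ Hm)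
    (g : Hp →L[ℂ] Hp) (h : Hm →L[ℂ] Hp)
    (hsymp : ContinuousLinearMap.adjoint (blockOp g h (cbar C h) (dbar C g)) ∘L Jop ∘L
      blockOp g h (cbar C h) (dbar C g) = Jop)
    (hh : IsHS bm h) (hg : IsTraceClassAlong bp (g - 1))
    (hinv : IsUnit (blockOp g h (cbar C h) (dbar C g)))
    (hdg : IsUnit (dbar C g)) :
    h ∘L Ring.inverse (dbar C g) = 0 ↔
      (h = 0 ∧ ContinuousLinearMap.adjoint g ∘L g = 1 ∧
        g ∘L ContinuousLinearMap.adjoint g = 1) :=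
  stabilizer_of_zero_general C g h hsymp hdg

end Siegel
end
end
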